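/- arXiv:2412.00043 — 2 statements merged into one kernel-verified Lean document; each statement's English description precedes it below -/
import Mathlib

section
/- Let R be a commutative ring and let a ≥ 3 be an integer. Let β be the 2×6 matrix over the polynomial ring R[x,y,z,w] with first row (x, 0, w^{2a−1}, z^{2a−1}, y^{a−1}, z^{a+1}) and second row (y, x, z^{2a−1}, w^{2a−1}, x^{a−1}, 0), and let α be the 6×2 matrix over R[x,y,z,w] with rows (w^{2a−1}, 0), (z^{2a−1}, w^{2a−1} + x^{a−2}·z^{a+1}), (−x, 0), (−y, −x), (0, −z^{a+1}), (y·z^{a−2}, x·z^{a−2} + y^{a−1}). Then the matrix product β·α is the 2×2 zero matrix. -/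
open MvPolynomial

/-- The right-hand matrix β of the monad, over `R[x,y,z,w]` with
variables `x = X 0`, `y = X 1`, `z = X 2`, `w = X 3`. -/
noncomputable def betaMat (R : Type*) [CommRing R] (a : ℕ) :
    Matrix (Fin 2) (Fin 6) (MvPolynomial (Fin 4) R) :=
  !![X 0, 0, (X 3) ^ (2 * a - 1), (X 2) ^ (2 * a - 1), (X 1) ^ (a - 1), (X 2) ^ (a + 1);
     X 1, X 0, (X 2) ^ (2 * a - 1), (X 3) ^ (2 * a - 1), (X 0) ^ (a - 1), 0]

/-- The left-hand matrix α of the monad, over `R[x,y,z,w]` with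
variables `x = X 0`, `y = X 1`, `z = X 2`, `w = X 3`. -/
noncomputable def alphaMat (R : Type*) [CommRing R] (a : ℕ) :
    Matrix (Fin 6) (Fin 2) (MvPolynomial (Fin 4) R) :=
  !![(X 3) ^ (2 * a - 1), 0;
     (X 2) ^ (2 * a - 1), (X 3) ^ (2 * a - 1) + (X 0) ^ (a - 2) * (X 2) ^ (a + 1);
     -(X 0), 0;
     -(X 1), -(X 0);
     0, -((X 2) ^ (a + 1));
     X 1 * (X 2) ^ (a - 2), X 0 * (X 2) ^ (a - 2) + (X 1) ^ (a - 1)]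

/-- The composition β · α is the zero 2×2 matrix. -/
theorem beta_mul_alpha_eq_zero (R : Type*) [CommRing R] (a : ℕ) (ha : 3 ≤ a) :
    betaMat R a * alphaMat R a = 0 := by
  have h1 : 2 * a - 1 = (a + 1) + (a - 2) := by omega
  have h2 : a - 1 = 1 + (a - 2) := by omega
  refine Matrix.ext fun i j => ?_
  fin_cases i <;> fin_cases j <;>
    simp [betaMat, alphaMat, Matrix.mul_apply, Fin.sum_univ_succ, Matrix.cons_val_succ, h1, h2,
      pow_add] <;>
    ring
end

section
/- Let K be a field and let a ≥ 3 be an integer. Suppose p and q are homogeneous polynomials of degree a−1 in K[x,y,z,w] and r is a homogeneous polynomial of degree 1 in K[x,y,z,w] such that x·p + y^{a−1}·r = 0 and y·p + x·q + x^{a−1}·r = 0. Then p = q = r = 0. -/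
open MvPolynomial

section Aux

variable {K : Type*} [Field K]

/-- Substitution sending `X 0 ↦ 0` and fixing the other variables. -/
noncomputable def sub0 (K : Type*) [Field K] :
    MvPolynomial (Fin 4) K →ₐ[K] MvPolynomial (Fin 4) K :=
  aeval (fun j => if j = 0 then 0 else X j)

lemma X0_dvd_sub_sub0 (f : MvPolynomial (Fin 4) K) :
    (X 0 : MvPolynomial (Fin 4) K) ∣ (f - sub0 K f) := by
  induction f using MvPolynomial.induction_on with
  | C a => simp [sub0]
  | add f g hf hg =>
      have := dvd_add hf hg
      have h : f + g - sub0 K (f + g) = (f - sub0 K f) + (g - sub0 K g) := by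
        rw [map_add]; ring
      rw [h]; exact this
  | mul_X f j hf =>
      have hXj : sub0 K (X j : MvPolynomial (Fin 4) K) = if j = 0 then 0 else X j :=
        aeval_X _ j
      by_cases hj : j = 0
      · subst hj
        rw [map_mul, hXj, if_pos rfl, mul_zero, sub_zero]
        exact dvd_mul_left _ _
      · rw [map_mul, hXj, if_neg hj,
          show f * X j - (sub0 K f) * X j = (f - sub0 K f) * X j by ring]
        exact hf.mul_right _

lemma X0_dvd_iff (f : MvPolynomial (Fin 4) K) :
    (X 0 : MvPolynomial (Fin 4) K) ∣ f ↔ sub0 K f = 0 := by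
  constructor
  · rintro ⟨g, rfl⟩
    rw [map_mul]
    have : sub0 K (X 0) = 0 := by simp [sub0]
    rw [this, zero_mul]
  · intro h
    have := X0_dvd_sub_sub0 (K := K) f
    rwa [h, sub_zero] at this

lemma prime_X0 : Prime (X 0 : MvPolynomial (Fin 4) K) := by
  refine ⟨X_ne_zero _, ?_, ?_⟩
  · intro h
    have h1 : (X 0 : MvPolynomial (Fin 4) K) ∣ 1 := h.dvd
    rw [X0_dvd_iff, map_one] at h1
    exact one_ne_zero h1
  · intro f g h
    rw [X0_dvd_iff, map_mul] at h
    rcases mul_eq_zero.mp h with h | h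
    · exact Or.inl ((X0_dvd_iff f).mpr h)
    · exact Or.inr ((X0_dvd_iff g).mpr h)

lemma not_X0_dvd_X1_pow (n : ℕ) :
    ¬ (X 0 : MvPolynomial (Fin 4) K) ∣ (X 1) ^ n := by
  intro h
  have h2 := prime_X0.dvd_of_dvd_pow h
  rw [X_dvd_X] at h2
  exact absurd h2 (by decide)

end Aux

/-- No nonzero syzygies of non-negative degree for the map β of the monad:
if `p`, `q` are homogeneous of degree `a-1` and `r` is homogeneous of degree 1
in `K[x,y,z,w]` (with `x = X 0`, `y = X 1`) and they satisfy
`x·p + y^(a-1)·r = 0` and `y·p + x·q + x^(a-1)·r = 0`, then `p = q = r = 0`. -/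
theorem no_nonneg_syzygy (K : Type*) [Field K] (a : ℕ) (ha : 3 ≤ a)
    (p q r : MvPolynomial (Fin 4) K)
    (hp : p.IsHomogeneous (a - 1)) (hq : q.IsHomogeneous (a - 1))
    (hr : r.IsHomogeneous 1)
    (h1 : X 0 * p + (X 1) ^ (a - 1) * r = 0)
    (h2 : X 1 * p + X 0 * q + (X 0) ^ (a - 1) * r = 0) :
    p = 0 ∧ q = 0 ∧ r = 0 := by
  have hx : Prime (X 0 : MvPolynomial (Fin 4) K) := prime_X0
  have hx0 : (X 0 : MvPolynomial (Fin 4) K) ≠ 0 := X_ne_zero _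
  obtain ⟨b, hb⟩ : ∃ b, a = b + 1 := ⟨a - 1, by omega⟩
  have hb1 : a - 1 = b := by omega
  rw [hb1] at h1 h2
  -- Step 1 : X 0 ∣ r
  have hd1 : (X 0 : MvPolynomial (Fin 4) K) ∣ (X 1) ^ b * r :=
    ⟨-p, by linear_combination h1⟩
  have hrdvd : (X 0 : MvPolynomial (Fin 4) K) ∣ r := by
    rcases hx.dvd_mul.mp hd1 with h | h
    · exact absurd h (not_X0_dvd_X1_pow b)
    · exact h
  obtain ⟨s, hs⟩ := hrdvd
  -- Step 2 : p = - X1^b * s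
  have hps : p = -((X 1) ^ b * s) := by
    have : X 0 * p = X 0 * (-((X 1) ^ b * s)) := by
      rw [hs] at h1; linear_combination h1
    exact mul_left_cancel₀ hx0 this
  -- Step 3 : X 0 ∣ s
  have hd2 : (X 0 : MvPolynomial (Fin 4) K) ∣ (X 1) ^ (b + 1) * s := by
    refine ⟨q + (X 0) ^ b * s, ?_⟩
    rw [hs, hps] at h2
    rw [pow_succ]
    linear_combination -h2
  have hsdvd : (X 0 : MvPolynomial (Fin 4) K) ∣ s := by
    rcases hx.dvd_mul.mp hd2 with h | h
    · exact absurd h (not_X0_dvd_X1_pow (b + 1))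
    · exact h
  obtain ⟨t, ht⟩ := hsdvd
  -- Step 4 : t = 0, using homogeneity of r
  have ht0 : t = 0 := by
    by_contra htne
    obtain ⟨m, hm⟩ := MvPolynomial.ne_zero_iff.mp htne
    set d : Fin 4 →₀ ℕ := Finsupp.single 0 1 + (Finsupp.single 0 1 + m) with hd
    have hc : coeff d r = coeff m t := by
      rw [hs, ht, hd, coeff_X_mul, coeff_X_mul]
    have hdeg : d.degree ≠ 1 := by
      have h0 : d 0 = 2 + m 0 := by simp [hd, Finsupp.single_eq_same]; omega
      have h1 := Finsupp.le_degree 0 d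
      omega
    exact hm (by rw [← hc]; exact hr.coeff_eq_zero hdeg)
  have hs0 : s = 0 := by rw [ht, ht0, mul_zero]
  have hr0 : r = 0 := by rw [hs, hs0, mul_zero]
  have hp0 : p = 0 := by rw [hps, hs0, mul_zero, neg_zero]
  have hq0 : q = 0 := by
    have : X 0 * q = X 0 * 0 := by
      rw [hp0, hr0] at h2; linear_combination h2
    exact mul_left_cancel₀ hx0 this
  exact ⟨hp0, hq0, hr0⟩
end
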